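/- Let μ be a positive Radon measure on ℝⁿ with μ(mI) ≲ ℓ(mI)^α for all cubes and dilation factors m ≥ 1, and let 0 < δ ≤ 1. Then for any cube I, the dyadic-annuli sum is controlled by the outer density: Σ_{m≥2} m^{−(α+δ)} (μ(mI) − μ((m−1)I))/ℓ(I)^α ≲ ρ_out(I), where ρ_out(I) = Σ_{m≥1} μ(mI)/(ℓ(mI)^α m^{δ+1}). -/

import Mathlib

/-
Write `a m = μ(mI)` and `s = α + δ`, so that `ℓ(I)^α ρ_out(I) = Σ_m a m m^{-s-1}`. Summation by
parts turns the annuli sum `Σ_{m ≤ N} m^{-s} (a m - a (m-1))` into the boundary term `N^{-s} a N`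
plus `Σ_{m < N} (m^{-s} - (m+1)^{-s}) a m`, and `m^{-s} - (m+1)^{-s} ≤ s m^{-s-1}` by the mean
value theorem. The boundary term is at most `2^{s+1} Σ_m a m m^{-s-1}` because each of the `N`
terms with `N < m ≤ 2N` is at least `a N (2N)^{-s-1}` by monotonicity. The growth bound only
serves to make `ρ_out(I)` finite.
-/

open MeasureTheory
open scoped Classical ENNReal

noncomputable section

/-- The closed axis-parallel cube with center `c` and side length `l`. -/
def centeredCube (n : ℕ) (c : EuclideanSpace ℝ (Fin n)) (l : ℝ) :
    Set (EuclideanSpace ℝ (Fin n)) :=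
  {x | ∀ i, |x i - c i| ≤ l / 2}

open Finset

theorem Finset.sum_range_succ_mul_sub_pred {R : Type*} [CommRing R] (w a : ℕ → R) (N : ℕ) :
    ∑ m ∈ range (N + 1), w m * (a m - a (m - 1)) =
      w N * a N - w 0 * a 0 + ∑ m ∈ range N, (w m - w (m + 1)) * a m := by
  induction N with
  | zero => simp
  | succ N ih => rw [sum_range_succ, ih, sum_range_succ, Nat.add_sub_cancel]; ring

theorem Real.rpow_neg_sub_rpow_neg_add_one_le {s x : ℝ} (hs : 0 ≤ s) (hx : 0 < x) :
    x ^ (-s) - (x + 1) ^ (-s) ≤ s * x ^ (-s - 1) := by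
  obtain ⟨c, ⟨hxc, -⟩, hc⟩ := exists_hasDerivAt_eq_slope (fun y : ℝ => y ^ (-s))
    (fun y => -s * y ^ (-s - 1)) (lt_add_one x)
    (continuousOn_id.rpow_const fun y hy => Or.inl (hx.trans_le hy.1).ne')
    (fun y hy => Real.hasDerivAt_rpow_const (Or.inl (hx.trans hy.1).ne'))
  have hcx : c ^ (-s - 1) ≤ x ^ (-s - 1) := Real.rpow_le_rpow_of_nonpos hx hxc.le (by linarith)
  simp only [add_sub_cancel_left, div_one] at hc
  nlinarith [mul_le_mul_of_nonneg_left hcx hs]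

theorem Real.natCast_rpow_neg_sub_le {s : ℝ} (hs : 0 < s) (m : ℕ) :
    (m : ℝ) ^ (-s) - ((m + 1 : ℕ) : ℝ) ^ (-s) ≤ s * (m : ℝ) ^ (-s - 1) := by
  rcases m.eq_zero_or_pos with rfl | hm
  · simp [Real.zero_rpow (neg_ne_zero.2 hs.ne'), Real.zero_rpow (by linarith : -s - 1 ≠ 0)]
  · push_cast
    exact Real.rpow_neg_sub_rpow_neg_add_one_le hs.le (by positivity)

theorem summable_mul_rpow_neg_of_le_rpow {a : ℕ → ℝ} {α δ K : ℝ} (ha0 : 0 ≤ a)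
    (hδ : 0 < δ) (h : ∀ m, 1 ≤ m → a m ≤ K * (m : ℝ) ^ α) :
    Summable fun m : ℕ => a m * (m : ℝ) ^ (-(α + δ) - 1) := by
  refine ((Real.summable_nat_rpow.2 (by linarith : -δ - 1 < -1)).mul_left K)
    |>.of_norm_bounded_eventually_nat (Filter.eventually_atTop.2 ⟨1, fun m hm => ?_⟩)
  rw [Real.norm_of_nonneg (mul_nonneg (ha0 m) (by positivity))]
  calc a m * (m : ℝ) ^ (-(α + δ) - 1)
      ≤ K * (m : ℝ) ^ α * (m : ℝ) ^ (-(α + δ) - 1) := by gcongr; exact h m hm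
    _ = K * (m : ℝ) ^ (-δ - 1) := by
        rw [mul_assoc, ← Real.rpow_add (by positivity)]; ring_nf

section AnnuliSum

variable {a : ℕ → ℝ} {s : ℝ}

theorem natCast_rpow_neg_mul_le_tsum (ha : Monotone a) (ha0 : 0 ≤ a) (hs : 0 < s)
    (hsum : Summable fun m : ℕ => a m * (m : ℝ) ^ (-s - 1)) (N : ℕ) :
    (N : ℝ) ^ (-s) * a N ≤ 2 ^ (s + 1) * ∑' m : ℕ, a m * (m : ℝ) ^ (-s - 1) := by
  have hnonneg : ∀ m : ℕ, 0 ≤ a m * (m : ℝ) ^ (-s - 1) :=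
    fun m => mul_nonneg (ha0 m) (by positivity)
  rcases N.eq_zero_or_pos with rfl | hN
  · simp only [Nat.cast_zero, Real.zero_rpow (neg_ne_zero.2 hs.ne'), zero_mul]
    exact mul_nonneg (by positivity) (tsum_nonneg hnonneg)
  have hterm : ∀ m ∈ Icc (N + 1) (2 * N),
      a N * (2 * N : ℝ) ^ (-s - 1) ≤ a m * (m : ℝ) ^ (-s - 1) := by
    intro m hm
    rw [mem_Icc] at hm
    have hm' : (m : ℝ) ≤ 2 * N := by exact_mod_cast hm.2
    have hm0 : (0 : ℝ) < m := Nat.cast_pos.2 (by omega)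
    exact mul_le_mul (ha (by omega)) (Real.rpow_le_rpow_of_nonpos hm0 hm' (by linarith))
      (by positivity) (ha0 m)
  have hblock := (card_nsmul_le_sum _ _ _ hterm).trans (hsum.sum_le_tsum _ fun m _ => hnonneg m)
  rw [Nat.card_Icc, show 2 * N + 1 - (N + 1) = N by omega, nsmul_eq_mul] at hblock
  have hN' : (N : ℝ) ≠ 0 := by positivity
  calc (N : ℝ) ^ (-s) * a N = 2 ^ (s + 1) * (N * (a N * (2 * N : ℝ) ^ (-s - 1))) := by
        rw [Real.mul_rpow (by norm_num) (by positivity), Real.rpow_sub_one two_ne_zero,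
          Real.rpow_sub_one hN', Real.rpow_neg zero_le_two, Real.rpow_add_one two_ne_zero]
        field_simp
    _ ≤ _ := by gcongr

theorem sum_range_rpow_neg_mul_sub_le (ha : Monotone a) (ha0 : 0 ≤ a) (hs : 0 < s)
    (hsum : Summable fun m : ℕ => a m * (m : ℝ) ^ (-s - 1)) (N : ℕ) :
    ∑ m ∈ range N, (m : ℝ) ^ (-s) * (a m - a (m - 1)) ≤
      (s + 2 ^ (s + 1)) * ∑' m : ℕ, a m * (m : ℝ) ^ (-s - 1) := by
  have hpartial :
      ∑ m ∈ range N, a m * (m : ℝ) ^ (-s - 1) ≤ ∑' m : ℕ, a m * (m : ℝ) ^ (-s - 1) :=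
    hsum.sum_le_tsum _ fun m _ => mul_nonneg (ha0 m) (by positivity)
  calc ∑ m ∈ range N, (m : ℝ) ^ (-s) * (a m - a (m - 1))
      ≤ ∑ m ∈ range (N + 1), (m : ℝ) ^ (-s) * (a m - a (m - 1)) :=
        sum_le_sum_of_subset_of_nonneg (range_subset_range.2 N.le_succ) fun m _ _ =>
          mul_nonneg (by positivity) (sub_nonneg.2 (ha (m.sub_le 1)))
    _ = (N : ℝ) ^ (-s) * a N +
          ∑ m ∈ range N, ((m : ℝ) ^ (-s) - ((m + 1 : ℕ) : ℝ) ^ (-s)) * a m := by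
        rw [sum_range_succ_mul_sub_pred]
        simp [Real.zero_rpow (neg_ne_zero.2 hs.ne')]
    _ ≤ 2 ^ (s + 1) * ∑' m : ℕ, a m * (m : ℝ) ^ (-s - 1) +
          s * ∑ m ∈ range N, a m * (m : ℝ) ^ (-s - 1) := by
        rw [mul_sum]
        refine add_le_add (natCast_rpow_neg_mul_le_tsum ha ha0 hs hsum N)
          (sum_le_sum fun m _ => ?_)
        calc ((m : ℝ) ^ (-s) - ((m + 1 : ℕ) : ℝ) ^ (-s)) * a m
            ≤ s * (m : ℝ) ^ (-s - 1) * a m :=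
              mul_le_mul_of_nonneg_right (Real.natCast_rpow_neg_sub_le hs m) (ha0 m)
          _ = s * (a m * (m : ℝ) ^ (-s - 1)) := by ring
    _ ≤ _ := by nlinarith

end AnnuliSum

theorem Real.inv_mul_rpow_mul_rpow_add_one {x l : ℝ} (hx : 0 < x) (hl : 0 ≤ l) (α δ : ℝ) :
    ((x * l) ^ α * x ^ (δ + 1))⁻¹ = x ^ (-(α + δ) - 1) / l ^ α := by
  rw [Real.mul_rpow hx.le hl, show -(α + δ) - 1 = -(α + (δ + 1)) by ring, Real.rpow_neg hx.le,
    Real.rpow_add hx α]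
  field_simp

theorem ite_one_le_div_rpow_mul_rpow_eq {l α δ : ℝ} (hl : 0 ≤ l) (hαδ : 0 ≤ α + δ)
    (b : ℝ) (m : ℕ) :
    (if 1 ≤ m then b / (((m : ℝ) * l) ^ α * (m : ℝ) ^ (δ + 1)) else 0) =
      b * (m : ℝ) ^ (-(α + δ) - 1) / l ^ α := by
  split_ifs with hm
  · rw [div_eq_mul_inv, Real.inv_mul_rpow_mul_rpow_add_one (Nat.cast_pos.2 hm) hl, mul_div_assoc]
  · obtain rfl : m = 0 := by omega
    rw [Nat.cast_zero, Real.zero_rpow (by linarith), mul_zero, zero_div]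

theorem centeredCube_mono (n : ℕ) (c : EuclideanSpace ℝ (Fin n)) :
    Monotone (centeredCube n c) :=
  fun _ _ hl _ hx i => (hx i).trans (by linarith)

theorem monotone_toReal_measure_centeredCube {n : ℕ} {μ : Measure (EuclideanSpace ℝ (Fin n))}
    {c : EuclideanSpace ℝ (Fin n)} {l : ℝ} (hl : 0 ≤ l)
    (hfin : ∀ m : ℕ, 1 ≤ m → μ (centeredCube n c (m * l)) ≠ ∞) :
    Monotone fun m : ℕ => (μ (centeredCube n c (m * l))).toReal :=
  monotone_nat_of_le_succ fun m => ENNReal.toReal_mono (hfin _ m.succ_pos) <|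
    measure_mono (centeredCube_mono n c (by gcongr; simp))

theorem annuli_sum_le_outer_density_general (n : ℕ) (α δ C : ℝ) (hα : 0 < α)
    (hδ : 0 < δ) (hC : 0 ≤ C)
    (μ : Measure (EuclideanSpace ℝ (Fin n))) :
    ∃ C' : ℝ, 0 < C' ∧
      ∀ (c : EuclideanSpace ℝ (Fin n)) (l : ℝ), 0 < l →
      (∀ m : ℕ, 1 ≤ m →
        μ (centeredCube n c (m * l)) ≤ ENNReal.ofReal (C * ((m : ℝ) * l) ^ α)) →
      (∑' m : ℕ, if 2 ≤ m then
          (m : ℝ) ^ (-(α + δ)) *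
            ((μ (centeredCube n c (m * l))).toReal -
              (μ (centeredCube n c ((m - 1 : ℕ) * l))).toReal) / l ^ α
        else 0) ≤
      C' * ∑' m : ℕ, if 1 ≤ m then
          (μ (centeredCube n c (m * l))).toReal / (((m : ℝ) * l) ^ α * (m : ℝ) ^ (δ + 1))
        else 0 := by
  refine ⟨α + δ + 2 ^ (α + δ + 1), by positivity, fun c l hl hgrow => ?_⟩
  set a : ℕ → ℝ := fun m => (μ (centeredCube n c (m * l))).toReal
  have ha : Monotone a := monotone_toReal_measure_centeredCube hl.le fun m hm =>
    ne_top_of_le_ne_top ENNReal.ofReal_ne_top (hgrow m hm)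
  have ha0 : 0 ≤ a := fun m => ENNReal.toReal_nonneg
  have hsum := summable_mul_rpow_neg_of_le_rpow ha0 hδ (K := C * l ^ α) fun (m : ℕ) hm => by
    rw [mul_assoc, ← Real.mul_rpow hl.le (by positivity), mul_comm l]
    exact ENNReal.toReal_le_of_le_ofReal (by positivity) (hgrow m hm)
  have hterm : ∀ m : ℕ, 0 ≤ (m : ℝ) ^ (-(α + δ)) * (a m - a (m - 1)) / l ^ α := fun m =>
    div_nonneg (mul_nonneg (by positivity) (sub_nonneg.2 (ha (m.sub_le 1)))) (by positivity)
  show (∑' m : ℕ, if 2 ≤ m then (m : ℝ) ^ (-(α + δ)) * (a m - a (m - 1)) / l ^ α else 0)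
    ≤ _ * ∑' m : ℕ, if 1 ≤ m then a m / (((m : ℝ) * l) ^ α * (m : ℝ) ^ (δ + 1)) else 0
  rw [tsum_congr fun m => ite_one_le_div_rpow_mul_rpow_eq hl.le (by positivity) (a m) m,
    tsum_div_const, ← mul_div_assoc]
  refine Real.tsum_le_of_sum_range_le (fun m => by split_ifs; exacts [hterm m, le_rfl])
    fun N => ?_
  calc ∑ m ∈ range N,
        (if 2 ≤ m then (m : ℝ) ^ (-(α + δ)) * (a m - a (m - 1)) / l ^ α else 0)
      ≤ (∑ m ∈ range N, (m : ℝ) ^ (-(α + δ)) * (a m - a (m - 1))) / l ^ α := by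
        rw [sum_div]
        exact sum_le_sum fun m _ => by split_ifs; exacts [le_rfl, hterm m]
    _ ≤ _ := by
        gcongr
        exact sum_range_rpow_neg_mul_sub_le ha ha0 (by positivity) hsum N

/-- Under the power growth `μ(mI) ≲ ℓ(mI)^α`, the dyadic-annuli sum
`Σ_{m ≥ 2} m^{-(α+δ)} (μ(mI) - μ((m-1)I))/ℓ(I)^α` is controlled by the outer density
`ρ_out(I) = Σ_{m ≥ 1} μ(mI)/(ℓ(mI)^α m^{δ+1})`. -/
theorem annuli_sum_le_outer_density (n : ℕ) (α δ C : ℝ) (hα : 0 < α) (hαn : α ≤ n)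
    (hδ : 0 < δ) (hδ1 : δ ≤ 1) (hC : 0 ≤ C)
    (μ : Measure (EuclideanSpace ℝ (Fin n))) :
    ∃ C' : ℝ, 0 < C' ∧
      ∀ (c : EuclideanSpace ℝ (Fin n)) (l : ℝ), 0 < l →
      (∀ m : ℕ, 1 ≤ m →
        μ (centeredCube n c (m * l)) ≤ ENNReal.ofReal (C * ((m : ℝ) * l) ^ α)) →
      (∑' m : ℕ, if 2 ≤ m then
          (m : ℝ) ^ (-(α + δ)) *
            ((μ (centeredCube n c (m * l))).toReal -
              (μ (centeredCube n c ((m - 1 : ℕ) * l))).toReal) / l ^ α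
        else 0) ≤
      C' * ∑' m : ℕ, if 1 ≤ m then
          (μ (centeredCube n c (m * l))).toReal / (((m : ℝ) * l) ^ α * (m : ℝ) ^ (δ + 1))
        else 0 :=
  annuli_sum_le_outer_density_general n α δ C hα hδ hC μ

end
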